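/- arXiv:2108.05335 — 4 statements merged into one kernel-verified Lean document; each statement's English description precedes it below -/
import Mathlib

section
/- Let G be a partially directed graph and let p be a path in G such that for every orientation of the undirected edges along p the resulting directed path is active. Then for every subpath p' of p and every orientation of the undirected edges along p', the resulting directed path is active. (Proposition 2 of the paper, for potential active paths witnessed by all orientations along the path.) -/
/-- A path in a partially directed graph with directed edge relation `D` and
undirected edge relation `U`: a list of at least two pairwise distinct vertices
in which every two consecutive vertices are joined by a directed edge (in either
direction) or by an undirected edge. -/
def IsPDPath {V : Type*} (D U : V → V → Prop) (p : List V) : Prop :=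
  2 ≤ p.length ∧ p.Nodup ∧ p.Chain' (fun u v => D u v ∨ D v u ∨ U u v)

/-- `O` is an orientation of the undirected edges along the path `p`: `O` only
orients undirected edges, and every consecutive pair of `p` joined by an
undirected edge is given exactly one of the two possible directions. -/
def OrientsAlong {V : Type*} (U : V → V → Prop) (p : List V) (O : V → V → Prop) : Prop :=
  (∀ u v, O u v → U u v) ∧
  (∀ u v, [u, v] <:+: p → U u v → (O u v ∧ ¬ O v u) ∨ (O v u ∧ ¬ O u v))

/-- A path in a directed graph is active if no internal vertex on it is a collider. -/
def IsActive {V : Type*} (D : V → V → Prop) (p : List V) : Prop :=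
  ∀ a b c : V, [a, b, c] <:+: p → ¬ (D a b ∧ D c b)

/-- In a duplicate-free list, a pair of adjacent vertices cannot occur in both
orders. -/
lemma not_both_infix {V : Type*} {u v : V} :
    ∀ {p : List V}, p.Nodup → [u, v] <:+: p → ¬ [v, u] <:+: p := by
  intro p
  induction p with
  | nil => intro _ h; exact absurd h.length_le (by simp)
  | cons x rest ih =>
    intro hnd huv hvu
    have hne : u ≠ v := by
      have : [u, v].Nodup := List.Nodup.sublist huv.sublist hnd
      simpa using this
    rw [List.infix_cons_iff] at huv hvu
    have hx : x ∉ rest := (List.nodup_cons.mp hnd).1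
    have hndr : rest.Nodup := (List.nodup_cons.mp hnd).2
    rcases huv with huv | huv
    · obtain ⟨t, ht⟩ := huv
      have hxu : x = u := by
        have := congrArg (fun l => l.head?) ht.symm; simpa using this
      rcases hvu with hvu | hvu
      · obtain ⟨t', ht'⟩ := hvu
        have hxv : x = v := by
          have := congrArg (fun l => l.head?) ht'.symm; simpa using this
        exact hne (hxu ▸ hxv)
      · have : u ∈ rest := hvu.subset (by simp)
        exact hx (hxu ▸ this)
    · rcases hvu with hvu | hvu
      · obtain ⟨t', ht'⟩ := hvu
        have hxv : x = v := by
          have := congrArg (fun l => l.head?) ht'.symm; simpa using this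
        have : v ∈ rest := huv.subset (by simp)
        exact hx (hxv ▸ this)
      · exact ih hndr huv hvu

/-- Proposition 2: if every orientation of the undirected edges along a path `p`
in a partially directed graph yields an active directed path, then the same
holds for every subpath of `p`. -/
theorem subpath_of_potential_active
    {V : Type*} [Fintype V] (D U : V → V → Prop)
    (hDirr : Irreflexive D) (hDasym : ∀ u v, D u v → ¬ D v u)
    (hUirr : Irreflexive U) (hUsymm : Symmetric U)
    (hDU : ∀ u v, ¬ (D u v ∧ U u v))
    (p : List V) (hp : IsPDPath D U p)
    (hact : ∀ O : V → V → Prop, OrientsAlong U p O →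
      IsActive (fun a b => D a b ∨ O a b) p)
    (q : List V) (hsub : q <:+: p) (hq : 2 ≤ q.length) :
    ∀ O : V → V → Prop, OrientsAlong U q O →
      IsActive (fun a b => D a b ∨ O a b) q := by
  intro O hO
  classical
  set O' : V → V → Prop := fun u v =>
    (O u v ∧ ([u, v] <:+: q ∨ [v, u] <:+: q)) ∨
    (U u v ∧ [u, v] <:+: p ∧ ¬ [u, v] <:+: q ∧ ¬ [v, u] <:+: q) with hO'def
  have hnd : p.Nodup := hp.2.1
  have hOU : ∀ u v, O u v → U u v := hO.1
  have hO'along : OrientsAlong U p O' := by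
    constructor
    · intro u v h
      rcases h with ⟨h, _⟩ | ⟨h, _, _⟩
      · exact hOU u v h
      · exact h
    · intro u v hinf hU
      by_cases hq1 : [u, v] <:+: q
      · rcases hO.2 u v hq1 hU with ⟨h1, h2⟩ | ⟨h1, h2⟩
        · left
          refine ⟨Or.inl ⟨h1, Or.inl hq1⟩, ?_⟩
          rintro (⟨h, _⟩ | ⟨_, _, _, h⟩)
          · exact h2 h
          · exact h hq1
        · right
          refine ⟨Or.inl ⟨h1, Or.inr hq1⟩, ?_⟩
          rintro (⟨h, _⟩ | ⟨_, _, h, _⟩)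
          · exact h2 h
          · exact h hq1
      · by_cases hq2 : [v, u] <:+: q
        · rcases hO.2 v u hq2 (hUsymm hU) with ⟨h1, h2⟩ | ⟨h1, h2⟩
          · right
            refine ⟨Or.inl ⟨h1, Or.inl hq2⟩, ?_⟩
            rintro (⟨h, _⟩ | ⟨_, _, _, h⟩)
            · exact h2 h
            · exact h hq2
          · left
            refine ⟨Or.inl ⟨h1, Or.inr hq2⟩, ?_⟩
            rintro (⟨h, _⟩ | ⟨_, _, h, _⟩)
            · exact h2 h
            · exact h hq2
        · left
          constructor
          · exact Or.inr ⟨hU, hinf, hq1, hq2⟩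
          · rintro (⟨_, hq3 | hq4⟩ | ⟨_, hvu, _, _⟩)
            · exact hq2 hq3
            · exact hq1 hq4
            · exact not_both_infix hnd hinf hvu
  have hactp := hact O' hO'along
  intro a b c habc hcol
  have habcp : [a, b, c] <:+: p := habc.trans hsub
  have hab : [a, b] <:+: q := List.IsInfix.trans (by exact ⟨[], [c], rfl⟩) habc
  have hbc : [b, c] <:+: q := List.IsInfix.trans (by exact ⟨[a], [], rfl⟩) habc
  apply hactp a b c habcp
  constructor
  · rcases hcol.1 with h | h
    · exact Or.inl h
    · exact Or.inr (Or.inl ⟨h, Or.inl hab⟩)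
  · rcases hcol.2 with h | h
    · exact Or.inl h
    · exact Or.inr (Or.inl ⟨h, Or.inr hbc⟩)
end

section
/- Let G be a DAG on a finite vertex set with distinguished vertices A ≠ Ŷ. Assume that no vertex is a parent of A (there is no directed edge into A) and that every vertex other than A and Ŷ is a parent of Ŷ (has a directed edge into Ŷ). Then X(P) is completely ordered with respect to A; more precisely, for all u, v ∈ X(P) with a directed edge u → v, u is prior to v with respect to A. (Proposition 3 of the paper.) -/
/-- A path in a directed graph `D`: a list of at least two pairwise distinct
vertices in which every two consecutive vertices `u, v` satisfy `D u v` or `D v u`. -/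
def IsPath {V : Type*} (D : V → V → Prop) (p : List V) : Prop :=
  2 ≤ p.length ∧ p.Nodup ∧ p.Chain' (fun u v => D u v ∨ D v u)

/-- An active path from `A` to `Yh`. -/
def IsActivePathFromTo {V : Type*} (D : V → V → Prop) (A Yh : V) (p : List V) : Prop :=
  IsPath D p ∧ IsActive D p ∧ p.head? = some A ∧ p.getLast? = some Yh

/-- `u` occurs before `v` on the list `p`. -/
def OccursBefore {V : Type*} (p : List V) (u v : V) : Prop :=
  ∃ i j : Fin p.length, i < j ∧ p.get i = u ∧ p.get j = v

/-- `x ∈ X(P)`: `x` is a vertex other than `A` and `Yh` lying on some active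
path from `A` to `Yh`. -/
def InXP {V : Type*} (D : V → V → Prop) (A Yh x : V) : Prop :=
  x ≠ A ∧ x ≠ Yh ∧ ∃ p : List V, IsActivePathFromTo D A Yh p ∧ x ∈ p

/-- `u` is prior to `v` with respect to `A`: some active path from `A` to `Yh`
contains both `u` and `v`, and on every such path `u` occurs before `v`. -/
def PriorTo {V : Type*} (D : V → V → Prop) (A Yh u v : V) : Prop :=
  (∃ p : List V, IsActivePathFromTo D A Yh p ∧ u ∈ p ∧ v ∈ p) ∧
  (∀ p : List V, IsActivePathFromTo D A Yh p → u ∈ p → v ∈ p → OccursBefore p u v)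

/-!
Because nothing points into `A`, an active path from `A` can never turn backwards: its first
edge leaves `A`, and a later backward edge would create a collider at the first place it occurs.
So the active paths from `A` to `Yh` are exactly the directed paths from `A` to `Yh`, and on a
directed path in a DAG a vertex never comes after one of its children. Conversely, following
an active path from `A` up to `u` and continuing along `u → v → Yh` gives a directed path through
both `u` and `v`; being directed in a DAG, it repeats no vertex and has no collider.
-/

namespace List

variable {α : Type*}

theorem IsChain.pairwise_transGen {R : α → α → Prop} {l : List α} (h : l.IsChain R) :
    l.Pairwise (Relation.TransGen R) :=
  (h.imp fun _ _ => .single).pairwise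

theorem Pairwise.occursBefore {R : α → α → Prop} {l : List α} {u v : α} (hl : l.Pairwise R)
    (hu : u ∈ l) (hv : v ∈ l) (hne : u ≠ v) (hvu : ¬ R v u) : OccursBefore l u v := by
  obtain ⟨i, hi, rfl⟩ := mem_iff_getElem.mp hu
  obtain ⟨j, hj, rfl⟩ := mem_iff_getElem.mp hv
  rcases lt_trichotomy i j with hij | rfl | hji
  · exact ⟨⟨i, hi⟩, ⟨j, hj⟩, hij, rfl, rfl⟩
  · exact absurd rfl hne
  · exact absurd (pairwise_iff_getElem.mp hl j i hj hi hji) hvu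

end List

section

open List Relation

variable {V : Type*} {D : V → V → Prop}

theorem IsActive.of_infix {l l' : List V} (hl : IsActive D l) (h : l' <:+: l) : IsActive D l' :=
  fun a b c habc => hl a b c (habc.trans h)

theorem IsActive.isChain_of_rel {a b : V} {l : List V} (hact : IsActive D (a :: b :: l))
    (hch : (a :: b :: l).IsChain (fun u v => D u v ∨ D v u)) (hab : D a b) :
    (a :: b :: l).IsChain D := by
  induction l generalizing a b with
  | nil => exact isChain_pair.mpr hab
  | cons c l ih =>
    have hch' := (isChain_cons_cons.mp hch).2
    have hbc : D b c := (isChain_cons_cons.mp hch').1.resolve_right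
      fun hcb => hact a b c ⟨[], l, rfl⟩ ⟨hab, hcb⟩
    exact isChain_cons_cons.mpr ⟨hab, ih (hact.of_infix (infix_cons (infix_refl _))) hch' hbc⟩

theorem IsActivePathFromTo.isChain {A Yh : V} {p : List V} (hA : ∀ w, ¬ D w A)
    (hp : IsActivePathFromTo D A Yh p) : p.IsChain D := by
  obtain ⟨⟨hlen, -, hch⟩, hact, hhead, -⟩ := hp
  rcases p with _ | ⟨a, _ | ⟨b, l⟩⟩
  · simp at hlen
  · simp at hlen
  · obtain rfl : a = A := by simpa using hhead
    exact hact.isChain_of_rel hch ((isChain_cons_cons.mp hch).1.resolve_right (hA b))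

theorem isActivePathFromTo_of_isChain (hdag : Irreflexive (TransGen D)) {A Yh : V} {p : List V}
    (hch : p.IsChain D) (hlen : 2 ≤ p.length) (hhead : p.head? = some A)
    (hlast : p.getLast? = some Yh) : IsActivePathFromTo D A Yh p := by
  have hnodup : p.Nodup :=
    hch.pairwise_transGen.imp fun {a b} (h : TransGen D a b) (e : a = b) => hdag b (e ▸ h)
  refine ⟨⟨hlen, hnodup, hch.imp fun _ _ => .inl⟩, ?_, hhead, hlast⟩
  rintro a b c habc ⟨-, hcb⟩
  have hbc : D b c := (isChain_cons_cons.mp (isChain_cons_cons.mp (hch.infix habc)).2).1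
  exact hdag b (.head hbc (.single hcb))

theorem IsActivePathFromTo.exists_through_rel (hdag : Irreflexive (TransGen D))
    {A Yh u v : V} (hA : ∀ w, ¬ D w A) {p : List V} (hp : IsActivePathFromTo D A Yh p)
    (hup : u ∈ p) (huv : D u v) (hvY : D v Yh) :
    ∃ q, IsActivePathFromTo D A Yh q ∧ u ∈ q ∧ v ∈ q := by
  obtain ⟨s, t, rfl⟩ := append_of_mem hup
  have hs : (s ++ [u]).IsChain D := (isChain_split.mp (hp.isChain hA)).1
  refine ⟨s ++ [u, v, Yh], isActivePathFromTo_of_isChain hdag ?_ (by simp) ?_ (by simp),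
    by simp, by simp⟩
  · simp [hs, huv, hvY]
  · simpa [head?_append] using hp.2.2.1

theorem IsActivePathFromTo.occursBefore_of_rel (hdag : Irreflexive (TransGen D))
    {A Yh u v : V} (hA : ∀ w, ¬ D w A) {p : List V} (hp : IsActivePathFromTo D A Yh p)
    (hu : u ∈ p) (hv : v ∈ p) (huv : D u v) : OccursBefore p u v :=
  (hp.isChain hA).pairwise_transGen.occursBefore hu hv
    (fun h => hdag v (.single (h ▸ huv))) (fun hvu => hdag u (.head huv hvu))

end

theorem xp_completely_ordered_general
    {V : Type*} (D : V → V → Prop)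
    (hdag : Irreflexive (Relation.TransGen D))
    (A Yh : V)
    (hA : ∀ w, ¬ D w A)
    (hY : ∀ w, w ≠ A → w ≠ Yh → D w Yh)
    (u v : V) (hu : InXP D A Yh u) (hv : InXP D A Yh v)
    (huv : D u v) :
    PriorTo D A Yh u v := by
  obtain ⟨-, -, p, hp, hup⟩ := hu
  exact ⟨hp.exists_through_rel hdag hA hup huv (hY v hv.1 hv.2.1),
    fun q hq hu hv => hq.occursBefore_of_rel hdag hA hu hv huv⟩

/-- Proposition 3: in a DAG in which no vertex is a parent of `A` and every
vertex other than `A` and `Yh` is a parent of `Yh`, the set `X(P)` is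
completely ordered with respect to `A`: for all `u, v ∈ X(P)` with a directed
edge `u → v`, `u` is prior to `v` with respect to `A`. -/
theorem xp_completely_ordered
    {V : Type*} [Fintype V] (D : V → V → Prop)
    (hirr : Irreflexive D) (hasym : ∀ u v, D u v → ¬ D v u)
    (hdag : Irreflexive (Relation.TransGen D))
    (A Yh : V) (hAY : A ≠ Yh)
    (hA : ∀ w, ¬ D w A)
    (hY : ∀ w, w ≠ A → w ≠ Yh → D w Yh)
    (u v : V) (hu : InXP D A Yh u) (hv : InXP D A Yh v)
    (huv : D u v) :
    PriorTo D A Yh u v :=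
  xp_completely_ordered_general D hdag A Yh hA hY u v hu hv huv
end

section
/- In a directed graph, every active path p = [v_0, v_1, …, v_k] splits into a backward-directed segment followed by a forward-directed segment: there exists an index m with 0 ≤ m ≤ k such that D v_{t+1} v_t holds for all t < m and D v_t v_{t+1} holds for all t with m ≤ t < k. In particular, every active path from v_0 to v_k is either fully forward-directed, fully backward-directed, or backward-directed up to some intermediate vertex and forward-directed afterwards. -/
/-- Every active path `p = [v₀, …, v_k]` splits into a backward-directed segment
followed by a forward-directed segment: there is an index `m ≤ k` such that the
edge between positions `t` and `t+1` points backward for all `t < m` and forward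
for all `m ≤ t < k`. -/
theorem active_path_splits
    {V : Type*} [Fintype V] (D : V → V → Prop)
    (hirr : Irreflexive D) (hasym : ∀ u v, D u v → ¬ D v u)
    (p : List V) (hp : IsPath D p) (hact : IsActive D p) :
    ∃ m : ℕ, m ≤ p.length - 1 ∧
      (∀ t : ℕ, (ht : t + 1 < p.length) → t < m →
        D (p.get ⟨t + 1, ht⟩) (p.get ⟨t, Nat.lt_of_succ_lt ht⟩)) ∧
      (∀ t : ℕ, (ht : t + 1 < p.length) → m ≤ t →
        D (p.get ⟨t, Nat.lt_of_succ_lt ht⟩) (p.get ⟨t + 1, ht⟩)) := by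
  classical
  obtain ⟨hlen, hnd, hch⟩ := hp
  simp only [List.get_eq_getElem]
  have hchain : ∀ t (ht : t + 1 < p.length),
      D (p[t]'(Nat.lt_of_succ_lt ht)) (p[t+1]'ht) ∨
      D (p[t+1]'ht) (p[t]'(Nat.lt_of_succ_lt ht)) := by
    intro t ht
    have := List.isChain_iff_getElem.mp hch t (by omega)
    simpa using this
  have hinf : ∀ t (ht : t + 2 < p.length),
      [p[t]'(by omega), p[t+1]'(by omega), p[t+2]'ht] <:+: p := by
    intro t ht
    have h1 : (p.drop t).take 3 = [p[t]'(by omega), p[t+1]'(by omega), p[t+2]'ht] := by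
      apply List.ext_getElem
      · simp; omega
      · intro i h1 h2
        simp only [List.length_take, List.length_drop, lt_min_iff] at h1
        obtain ⟨h3, h4⟩ := h1
        rw [List.getElem_take, List.getElem_drop]
        interval_cases i <;> simp
    rw [← h1]
    exact ((p.drop t).take_prefix 3).isInfix.trans (p.drop_suffix t).isInfix
  -- forward edges propagate forward
  have hfwd : ∀ k s (hs : s + 1 + k < p.length),
      D (p[s]'(by omega)) (p[s+1]'(by omega)) →
      D (p[s+k]'(by omega)) (p[s+k+1]'(by omega)) := by
    intro k
    induction k with
    | zero => intro s hs h; simpa using h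
    | succ k ih =>
      intro s hs h
      have hk : D (p[s+k]'(by omega)) (p[s+k+1]'(by omega)) := ih s (by omega) h
      rcases hchain (s+k+1) (by omega) with h' | h'
      · convert h' using 2 <;> omega
      · exfalso
        exact hact _ _ _ (hinf (s+k) (by omega)) ⟨hk, h'⟩
  by_cases hE : ∃ t, ∃ h : t + 1 < p.length, D (p[t]'(Nat.lt_of_succ_lt h)) (p[t+1]'h)
  · set m := Nat.find hE with hm
    obtain ⟨hmlt, hmfwd⟩ := Nat.find_spec hE
    refine ⟨m, by omega, ?_, ?_⟩
    · intro t ht htm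
      have := Nat.find_min hE htm
      push_neg at this
      rcases hchain t ht with h | h
      · exact absurd h (this ht)
      · exact h
    · intro t ht hmt
      have := hfwd (t - m) m (by omega) hmfwd
      convert this using 2 <;> omega
  · push_neg at hE
    refine ⟨p.length - 1, le_refl _, ?_, ?_⟩
    · intro t ht htm
      rcases hchain t ht with h | h
      · exact absurd h (hE t ht)
      · exact h
    · intro t ht hmt
      omega
end

section
/- Let G be a DAG and let A be a vertex with no parent (no directed edge into A). If there is a directed edge u → v, then on every active path starting at A that contains both u and v, the vertex u occurs before the vertex v. -/
lemma IsActive.of_cons {V : Type*} {D : V → V → Prop} {x : V} {p : List V}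
    (h : IsActive D (x :: p)) : IsActive D p :=
  fun a b c hinf => h a b c (hinf.trans (List.suffix_cons x p).isInfix)

lemma IsActive.isChain_of_rel_s5 {V : Type*} {D : V → V → Prop} :
    ∀ {l : List V} {x y : V}, IsActive D (x :: y :: l) → D x y →
      (x :: y :: l).IsChain (fun u v => D u v ∨ D v u) → (x :: y :: l).IsChain D
  | [], _, _, _, hxy, _ => List.isChain_pair.mpr hxy
  | z :: l, x, y, hact, hxy, hch => by
    have hzy : ¬ D z y := fun hzy =>
      hact x y z (List.prefix_iff_eq_take.mpr rfl).isInfix ⟨hxy, hzy⟩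
    have hyz : D y z :=
      ((List.isChain_cons_cons.mp (List.isChain_cons_cons.mp hch).2).1).resolve_right hzy
    exact List.isChain_cons_cons.mpr
      ⟨hxy, hact.of_cons.isChain_of_rel_s5 hyz (List.isChain_cons_cons.mp hch).2⟩

lemma IsPath.isChain_of_isActive {V : Type*} {D : V → V → Prop} {A : V} {p : List V}
    (hp : IsPath D p) (hact : IsActive D p) (hhead : p.head? = some A) (hA : ∀ w, ¬ D w A) :
    p.IsChain D := by
  obtain ⟨hlen, -, hch⟩ := hp
  match p, hhead, hlen with
  | x :: b :: rest, hhead, _ =>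
    obtain rfl : x = A := by simpa using hhead
    have hxb : D x b := (List.isChain_cons_cons.mp hch).1.resolve_right (hA b)
    exact hact.isChain_of_rel_s5 hxb hch

lemma occursBefore_of_pairwise {V : Type*} {R : V → V → Prop} {p : List V} {u v : V}
    (hp : p.Pairwise R) (hu : u ∈ p) (hv : v ∈ p) (hne : u ≠ v) (hvu : ¬ R v u) :
    OccursBefore p u v := by
  obtain ⟨i, rfl⟩ := List.mem_iff_get.mp hu
  obtain ⟨j, rfl⟩ := List.mem_iff_get.mp hv
  rcases lt_trichotomy i j with hij | rfl | hji
  · exact ⟨i, j, hij, rfl, rfl⟩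
  · exact absurd rfl hne
  · exact absurd (hp.rel_get_of_lt hji) hvu

theorem parent_occurs_before_on_active_path_general
    {V : Type*} (D : V → V → Prop)
    (hdag : Irreflexive (Relation.TransGen D))
    (A : V) (hA : ∀ w, ¬ D w A)
    (u v : V) (huv : D u v)
    (p : List V) (hp : IsPath D p) (hact : IsActive D p)
    (hhead : p.head? = some A)
    (hu : u ∈ p) (hv : v ∈ p) :
    OccursBefore p u v := by
  have hancestors : p.Pairwise (Relation.TransGen D) :=
    ((hp.isChain_of_isActive hact hhead hA).imp fun _ _ => .single).pairwise
  refine occursBefore_of_pairwise hancestors hu hv ?_ ?_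
  · rintro rfl
    exact hdag u (.single huv)
  · exact fun hvu => hdag u (.head huv hvu)

/-- In a DAG in which `A` has no parent, if there is a directed edge `u → v`,
then on every active path starting at `A` containing both `u` and `v`, the
vertex `u` occurs before `v`. -/
theorem parent_occurs_before_on_active_path
    {V : Type*} [Fintype V] (D : V → V → Prop)
    (hirr : Irreflexive D) (hasym : ∀ u v, D u v → ¬ D v u)
    (hdag : Irreflexive (Relation.TransGen D))
    (A : V) (hA : ∀ w, ¬ D w A)
    (u v : V) (huv : D u v)
    (p : List V) (hp : IsPath D p) (hact : IsActive D p)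
    (hhead : p.head? = some A)
    (hu : u ∈ p) (hv : v ∈ p) :
    OccursBefore p u v :=
  parent_occurs_before_on_active_path_general D hdag A hA u v huv p hp hact hhead hu hv
end
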